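/- arXiv:2306.17056 — 5 statements merged into one kernel-verified Lean document; each statement's English description precedes it below -/
import Mathlib

section
/- Let V be a real inner product space and a : V → V → ℝ a symmetric, nonnegative bilinear form. Suppose a sequence (u n) in V satisfies, for all n ≥ 1, ⟪u (n+1) - 2 u n + u (n-1), v⟫ / τ² + a ((u (n+1) + 2 u n + u (n-1))/4) v = 0 for all v ∈ V, where τ > 0. Define the discrete energy E n = (1/2)(‖(u (n+1) - u n)/τ‖² + a ((u (n+1) + u n)/2) ((u (n+1) + u n)/2)). Then E n = E 0 for all n ≥ 0. -/
open RealInnerProductSpace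

theorem crank_nicolson_energy_conservation
    {V : Type*} [NormedAddCommGroup V] [InnerProductSpace ℝ V]
    (a : V → V → ℝ)
    (ha_add : ∀ x y z : V, a (x + y) z = a x z + a y z)
    (ha_smul : ∀ (c : ℝ) (x y : V), a (c • x) y = c * a x y)
    (ha_symm : ∀ x y : V, a x y = a y x)
    (ha_nonneg : ∀ x : V, 0 ≤ a x x)
    (τ : ℝ) (hτ : 0 < τ)
    (u : ℕ → V)
    (hu : ∀ n : ℕ, 1 ≤ n → ∀ v : V,
      ⟪u (n+1) - (2:ℝ) • u n + u (n-1), v⟫ / τ^2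
        + a ((1/4 : ℝ) • (u (n+1) + (2:ℝ) • u n + u (n-1))) v = 0)
    (E : ℕ → ℝ)
    (hE : ∀ n : ℕ, E n = (1/2) * (‖(1/τ) • (u (n+1) - u n)‖^2
        + a ((1/2 : ℝ) • (u (n+1) + u n)) ((1/2 : ℝ) • (u (n+1) + u n)))) :
    ∀ n : ℕ, E n = E 0 := by
  have ha_add' : ∀ x y z : V, a x (y + z) = a x y + a x z := fun x y z => by
    rw [ha_symm, ha_add, ha_symm y x, ha_symm z x]
  have ha_smul' : ∀ (c : ℝ) (x y : V), a x (c • y) = c * a x y := fun c x y => by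
    rw [ha_symm, ha_smul, ha_symm]
  have ha_sub' : ∀ x y z : V, a x (y - z) = a x y - a x z := fun x y z => by
    rw [sub_eq_add_neg, ha_add', ← neg_one_smul ℝ z, ha_smul']; ring
  intro n
  induction n with
  | zero => rfl
  | succ n ih =>
    rw [← ih]
    have key := hu (n+1) (by omega) (u (n+2) - u n)
    simp only [Nat.add_sub_cancel] at key
    set A := u (n+2) with hA
    set B := u (n+1) with hB
    set C := u n with hC
    have h1 : A - (2:ℝ) • B + C = (A - B) - (B - C) := by module
    have h2 : (A - C : V) = (A - B) + (B - C) := by abel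
    have hinner : ⟪A - (2:ℝ) • B + C, A - C⟫ = ‖A - B‖^2 - ‖B - C‖^2 := by
      rw [h1, h2, inner_sub_left, inner_add_right, inner_add_right,
        real_inner_comm (B - C) (A - B), real_inner_self_eq_norm_sq,
        real_inner_self_eq_norm_sq]
      ring
    have h3 : A + (2:ℝ) • B + C = (A + B) + (B + C) := by module
    have haterm : a ((1/4 : ℝ) • (A + (2:ℝ) • B + C)) (A - C)
        = (1/4) * (a (A + B) (A + B) - a (B + C) (B + C)) := by
      have h4 : (A - C : V) = (A + B) - (B + C) := by abel
      rw [h3, h4, ha_smul, ha_add, ha_sub', ha_sub', ha_symm (B + C) (A + B)]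
      ring
    rw [hinner, haterm] at key
    have hnorm : ∀ w : V, ‖(1/τ) • w‖^2 = ‖w‖^2 / τ^2 := fun w => by
      rw [norm_smul, Real.norm_eq_abs, abs_of_pos (by positivity : (0:ℝ) < 1/τ),
        mul_pow, div_pow, one_pow]
      ring
    have hahalf : ∀ w : V, a ((1/2 : ℝ) • w) ((1/2 : ℝ) • w) = (1/4) * a w w :=
      fun w => by rw [ha_smul, ha_smul']; ring
    rw [hE (n+1), hE n]
    show (1/2) * (‖(1/τ) • (A - B)‖^2 + a ((1/2:ℝ) • (A + B)) ((1/2:ℝ) • (A + B)))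
      = (1/2) * (‖(1/τ) • (B - C)‖^2 + a ((1/2:ℝ) • (B + C)) ((1/2:ℝ) • (B + C)))
    rw [hnorm, hnorm, hahalf, hahalf]
    have : (‖A - B‖^2 - ‖B - C‖^2) / τ^2 = -((1/4) * (a (A+B) (A+B) - a (B+C) (B+C))) := by
      linarith
    have hτ2 : τ^2 ≠ 0 := by positivity
    field_simp at this ⊢
    linarith
end

section
/- Let V be a real inner product space and a : V → V → ℝ a symmetric, nonnegative bilinear form. Suppose (u n) in V satisfies, for all n ≥ 1 and all v ∈ V, ⟪u (n+1) - 2 u n + u (n-1), v⟫ / τ² + a ((u (n+1) + 2 u n + u (n-1))/4) v = ⟪f n, v⟫, where τ > 0 and (f n) is a sequence in V. With E n = (1/2)(‖(u (n+1) - u n)/τ‖² + a ((u (n+1)+u n)/2) ((u (n+1)+u n)/2)), we have √(E n) ≤ √(E 0) + Σ_{j=1}^{n} (τ/√2) ‖f j‖ for all n ≥ 0. -/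
open RealInnerProductSpace

theorem crank_nicolson_energy_stability
    {V : Type*} [NormedAddCommGroup V] [InnerProductSpace ℝ V]
    (a : V → V → ℝ)
    (ha_add : ∀ x y z : V, a (x + y) z = a x z + a y z)
    (ha_smul : ∀ (c : ℝ) (x y : V), a (c • x) y = c * a x y)
    (ha_symm : ∀ x y : V, a x y = a y x)
    (ha_nonneg : ∀ x : V, 0 ≤ a x x)
    (τ : ℝ) (hτ : 0 < τ)
    (f : ℕ → V)
    (u : ℕ → V)
    (hu : ∀ n : ℕ, 1 ≤ n → ∀ v : V,
      ⟪u (n+1) - (2:ℝ) • u n + u (n-1), v⟫ / τ^2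
        + a ((1/4 : ℝ) • (u (n+1) + (2:ℝ) • u n + u (n-1))) v = ⟪f n, v⟫)
    (E : ℕ → ℝ)
    (hE : ∀ n : ℕ, E n = (1/2) * (‖(1/τ) • (u (n+1) - u n)‖^2
        + a ((1/2 : ℝ) • (u (n+1) + u n)) ((1/2 : ℝ) • (u (n+1) + u n)))) :
    ∀ n : ℕ, Real.sqrt (E n) ≤ Real.sqrt (E 0)
      + ∑ j ∈ Finset.Icc 1 n, (τ / Real.sqrt 2) * ‖f j‖ := by
  have hτ' : τ ≠ 0 := ne_of_gt hτ
  have ha_add' : ∀ x y z : V, a x (y + z) = a x y + a x z := fun x y z => by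
    rw [ha_symm, ha_add, ha_symm y x, ha_symm z x]
  have ha_smul' : ∀ (c : ℝ) (x y : V), a x (c • y) = c * a x y := fun c x y => by
    rw [ha_symm, ha_smul, ha_symm]
  have ha_sub : ∀ x y z : V, a (x - y) z = a x z - a y z := fun x y z => by
    have h : x - y = x + (-1 : ℝ) • y := by module
    rw [h, ha_add, ha_smul]; ring
  have ha_sub' : ∀ x y z : V, a x (y - z) = a x y - a x z := fun x y z => by
    rw [ha_symm, ha_sub, ha_symm y x, ha_symm z x]
  have hE_nonneg : ∀ n, 0 ≤ E n := fun n => by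
    rw [hE n]
    nlinarith [ha_nonneg ((1/2 : ℝ) • (u (n+1) + u n)),
      sq_nonneg ‖(1/τ) • (u (n+1) - u n)‖]
  have h2 : Real.sqrt 2 * Real.sqrt 2 = 2 := Real.mul_self_sqrt (by norm_num)
  have h2pos : (0:ℝ) < Real.sqrt 2 := Real.sqrt_pos.mpr (by norm_num)
  -- norm scaling
  have hns : ∀ w : V, ‖(1/τ) • w‖ = ‖w‖ / τ := fun w => by
    rw [norm_smul, Real.norm_eq_abs, abs_of_pos (by positivity)]
    ring
  -- d n ≤ √2 √(E n)
  have hd : ∀ n, ‖u (n+1) - u n‖ / τ ≤ Real.sqrt 2 * Real.sqrt (E n) := fun n => by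
    have hx2 : (‖u (n+1) - u n‖ / τ)^2 ≤ 2 * E n := by
      rw [hE n, hns]
      nlinarith [ha_nonneg ((1/2 : ℝ) • (u (n+1) + u n))]
    calc ‖u (n+1) - u n‖ / τ = Real.sqrt ((‖u (n+1) - u n‖ / τ)^2) :=
          (Real.sqrt_sq (by positivity)).symm
      _ ≤ Real.sqrt (2 * E n) := Real.sqrt_le_sqrt hx2
      _ = Real.sqrt 2 * Real.sqrt (E n) := Real.sqrt_mul (by norm_num) _
  -- key energy identity
  have key : ∀ m : ℕ, E (m+1) - E m = (1/2) * ⟪f (m+1), u (m+2) - u m⟫ := by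
    intro m
    have h := hu (m+1) (by omega) (u (m+2) - u m)
    simp only [Nat.add_sub_cancel] at h
    have hinner : ⟪u (m+1+1) - (2:ℝ) • u (m+1) + u m, u (m+2) - u m⟫
        = ‖u (m+2) - u (m+1)‖^2 - ‖u (m+1) - u m‖^2 := by
      rw [← real_inner_self_eq_norm_sq, ← real_inner_self_eq_norm_sq]
      simp only [inner_sub_left, inner_sub_right, inner_add_left, inner_add_right,
        real_inner_smul_left, real_inner_smul_right]
      rw [real_inner_comm (u (m+1)) (u (m+2)), real_inner_comm (u m) (u (m+2)),
        real_inner_comm (u m) (u (m+1))]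
      ring
    have hbil : ∀ P Q : V, a ((1/2 : ℝ) • P + (1/2 : ℝ) • Q) ((2:ℝ) • P - (2:ℝ) • Q)
        = a P P - a Q Q := by
      intro P Q
      rw [ha_add, ha_smul, ha_smul, ha_sub', ha_sub', ha_smul', ha_smul',
        ha_smul', ha_smul', ha_symm Q P]
      ring
    have hx : (1/4 : ℝ) • (u (m+1+1) + (2:ℝ) • u (m+1) + u m)
        = (1/2 : ℝ) • ((1/2 : ℝ) • (u (m+2) + u (m+1))) + (1/2 : ℝ) • ((1/2 : ℝ) • (u (m+1) + u m)) := by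
      module
    have hy : u (m+2) - u m = (2:ℝ) • ((1/2 : ℝ) • (u (m+2) + u (m+1))) - (2:ℝ) • ((1/2 : ℝ) • (u (m+1) + u m)) := by
      module
    have haterm : a ((1/4 : ℝ) • (u (m+1+1) + (2:ℝ) • u (m+1) + u m)) (u (m+2) - u m)
        = a ((1/2 : ℝ) • (u (m+2) + u (m+1))) ((1/2 : ℝ) • (u (m+2) + u (m+1)))
          - a ((1/2 : ℝ) • (u (m+1) + u m)) ((1/2 : ℝ) • (u (m+1) + u m)) := by
      rw [hx, hy, hbil]
    have hEn1 := hE (m+1)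
    have hEn := hE m
    rw [hinner, haterm] at h

    rw [hEn1, hEn, hns, hns, div_pow, div_pow]
    linear_combination (1/2) * h
  -- one-step estimate
  have step : ∀ m : ℕ,
      Real.sqrt (E (m+1)) ≤ Real.sqrt (E m) + (τ / Real.sqrt 2) * ‖f (m+1)‖ := by
    intro m
    have hk := key m
    have htr : ‖u (m+2) - u m‖ ≤ ‖u (m+2) - u (m+1)‖ + ‖u (m+1) - u m‖ := by
      have h : u (m+2) - u m = (u (m+2) - u (m+1)) + (u (m+1) - u m) := by abel
      rw [h]; exact norm_add_le _ _
    have hb : ⟪f (m+1), u (m+2) - u m⟫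
        ≤ ‖f (m+1)‖ * (‖u (m+2) - u (m+1)‖ + ‖u (m+1) - u m‖) :=
      (real_inner_le_norm _ _).trans
        (mul_le_mul_of_nonneg_left htr (norm_nonneg _))
    set s := Real.sqrt (E (m+1)) with hs
    set t := Real.sqrt (E m) with ht
    have hs2 : s^2 = E (m+1) := Real.sq_sqrt (hE_nonneg _)
    have ht2 : t^2 = E m := Real.sq_sqrt (hE_nonneg _)
    have hsnn : 0 ≤ s := Real.sqrt_nonneg _
    have htnn : 0 ≤ t := Real.sqrt_nonneg _
    have hd1 : ‖u (m+2) - u (m+1)‖ / τ ≤ Real.sqrt 2 * s := hd (m+1)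
    have hd0 : ‖u (m+1) - u m‖ / τ ≤ Real.sqrt 2 * t := hd m
    have hd1' : ‖u (m+2) - u (m+1)‖ ≤ τ * (Real.sqrt 2 * s) := by
      rw [div_le_iff₀ hτ] at hd1; linarith
    have hd0' : ‖u (m+1) - u m‖ ≤ τ * (Real.sqrt 2 * t) := by
      rw [div_le_iff₀ hτ] at hd0; linarith
    have hfnn : 0 ≤ ‖f (m+1)‖ := norm_nonneg _
    have hst : s^2 - t^2 ≤ (τ / Real.sqrt 2 * ‖f (m+1)‖) * (s + t) := by
      have h1 : s^2 - t^2 ≤ (1/2) * (‖f (m+1)‖ * (τ * (Real.sqrt 2 * s) + τ * (Real.sqrt 2 * t))) := by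
        rw [hs2, ht2, hk]
        have : ⟪f (m+1), u (m+2) - u m⟫
            ≤ ‖f (m+1)‖ * (τ * (Real.sqrt 2 * s) + τ * (Real.sqrt 2 * t)) := by
          refine hb.trans ?_
          apply mul_le_mul_of_nonneg_left _ hfnn
          linarith
        linarith
      have hconv : τ / Real.sqrt 2 = (1/2) * (τ * Real.sqrt 2) := by
        rw [div_eq_iff (ne_of_gt h2pos)]; nlinarith
      rw [hconv]
      nlinarith [h1]
    have hcnn : 0 ≤ τ / Real.sqrt 2 * ‖f (m+1)‖ := by positivity
    nlinarith [hst, hcnn, hsnn, htnn]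
  intro n
  induction n with
  | zero => simp
  | succ n ih =>
    rw [Finset.sum_Icc_succ_top (by omega : 1 ≤ n+1)]
    have := step n
    linarith
end

section
/- Let W₋₁ denote the lower branch of the Lambert W function, i.e., for 0 < x ≤ e⁻¹, y = W₋₁(-x) is the unique y ≤ -1 with y·e^y = -x. Then for all x with 0 < x ≤ e⁻¹, (1 - e⁻¹) ≤ log(1/x)/(-W₋₁(-x)) ≤ 1. -/
theorem lambertW_log_bound (x : ℝ) (hx0 : 0 < x) (hx1 : x ≤ Real.exp (-1))
    (y : ℝ) (hy : y ≤ -1) (hWy : y * Real.exp y = -x) :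
    (1 - Real.exp (-1)) ≤ Real.log (1/x) / (-y) ∧ Real.log (1/x) / (-y) ≤ 1 := by
  set t : ℝ := -y with ht
  have ht1 : 1 ≤ t := by simp [ht]; linarith
  have ht0 : 0 < t := by linarith
  have hxeq : x = t * Real.exp (-t) := by
    have : y = -t := by simp [ht]
    rw [this] at hWy; linarith
  have hlogx : Real.log (1/x) = t - Real.log t := by
    rw [one_div, Real.log_inv, hxeq, Real.log_mul (ne_of_gt ht0) (Real.exp_ne_zero _),
      Real.log_exp]
    ring
  have hlogt0 : 0 ≤ Real.log t := Real.log_nonneg ht1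
  have hlogt : Real.log t ≤ t * Real.exp (-1) := by
    have h := Real.log_le_sub_one_of_pos (show (0:ℝ) < t * Real.exp (-1) by positivity)
    rw [Real.log_mul (ne_of_gt ht0) (Real.exp_ne_zero _), Real.log_exp] at h
    have he : Real.exp (-1) ≤ 1 := by
      rw [Real.exp_le_one_iff]; norm_num
    nlinarith [Real.add_one_le_exp (-1 : ℝ)]
  rw [hlogx]
  constructor
  · rw [le_div_iff₀ ht0]
    nlinarith
  · rw [div_le_one ht0]
    linarith
end

section
/- Let V be a real inner product space, a : V → V → ℝ a symmetric positive semidefinite bilinear form, τ > 0, and define the K-norm ‖v‖_K² = ‖v‖² + (τ²/4)·a v v. Suppose μ, ξ₁, ξ₂ ∈ V satisfy, for all v in a subspace W ⊆ V containing μ: ⟪μ, v⟫ + (τ²/4) a μ v = ⟪2ξ₁ - ξ₂, v⟫ - (τ²/4) a (2ξ₁ + ξ₂) v. Then ‖μ‖_K ≤ 2‖ξ₁‖_K + ‖ξ₂‖_K. -/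
/-!
Testing the equation with `v = μ` gives
`‖μ‖_K² = 2 (⟪ξ₁, μ⟫ - c a ξ₁ μ) - (⟪ξ₂, μ⟫ + c a ξ₂ μ)` with `c = τ² / 4`.
Each bracket is at most `‖ξᵢ‖_K ‖μ‖_K`, because `|⟪x, y⟫| + c |a x y| ≤ ‖x‖_K ‖y‖_K`:
Cauchy–Schwarz for the inner product and for the semi-inner product `a`, followed by
Cauchy–Schwarz in `ℝ²`. Dividing by `‖μ‖_K` gives the claim.
-/

open RealInnerProductSpace

theorem abs_add_abs_le_sqrt_add_mul_sqrt_add {p q P Q R S : ℝ} (hP : 0 ≤ P) (hQ : 0 ≤ Q)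
    (hR : 0 ≤ R) (hS : 0 ≤ S) (hp : p ^ 2 ≤ P * R) (hq : q ^ 2 ≤ Q * S) :
    |p| + |q| ≤ √(P + Q) * √(R + S) :=
  calc |p| + |q| ≤ √P * √R + √Q * √S := by
        rw [← Real.sqrt_mul hP, ← Real.sqrt_mul hQ]
        exact add_le_add (Real.abs_le_sqrt hp) (Real.abs_le_sqrt hq)
    _ ≤ √(P + Q) * √(R + S) := by
        simpa [Fin.sum_univ_two] using Real.sum_sqrt_mul_sqrt_le Finset.univ
          (f := ![P, Q]) (g := ![R, S]) (by simp [Fin.forall_fin_two, *])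
          (by simp [Fin.forall_fin_two, *])

namespace LinearMap.BilinForm

variable {R M : Type*} [CommSemiring R] [AddCommMonoid M] [Module R M]

def ofSymm (a : M → M → R) (ha_add : ∀ x y z, a (x + y) z = a x z + a y z)
    (ha_smul : ∀ (c : R) x y, a (c • x) y = c * a x y) (ha_symm : ∀ x y, a x y = a y x) :
    LinearMap.BilinForm R M :=
  mk₂ R a ha_add ha_smul
    (fun x y z => by rw [ha_symm, ha_add, ha_symm y, ha_symm z])
    (fun c x y => by rw [ha_symm, ha_smul, ha_symm, smul_eq_mul])

theorem isPosSemidef_ofSymm [LE R] (a : M → M → R)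
    (ha_add : ∀ x y z, a (x + y) z = a x z + a y z)
    (ha_smul : ∀ (c : R) x y, a (c • x) y = c * a x y) (ha_symm : ∀ x y, a x y = a y x)
    (ha_nonneg : ∀ x, 0 ≤ a x x) :
    (ofSymm a ha_add ha_smul ha_symm).IsPosSemidef where
  isSymm := ⟨ha_symm⟩
  isNonneg := ⟨ha_nonneg⟩

end LinearMap.BilinForm

section KNorm

variable {V : Type*} [NormedAddCommGroup V] [InnerProductSpace ℝ V]

/-- The paper's `‖v‖_K` is `kNorm B (τ ^ 2 / 4) v`, where `B` is the form `a`. -/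
noncomputable def kNorm (B : LinearMap.BilinForm ℝ V) (c : ℝ) (v : V) : ℝ :=
  √(‖v‖ ^ 2 + c * B v v)

variable {B : LinearMap.BilinForm ℝ V} {c : ℝ}

theorem kNorm_nonneg (v : V) : 0 ≤ kNorm B c v := Real.sqrt_nonneg _

theorem kNorm_sq (hB : B.IsPosSemidef) (hc : 0 ≤ c) (v : V) :
    kNorm B c v ^ 2 = ‖v‖ ^ 2 + c * B v v :=
  Real.sq_sqrt (by have := hB.nonneg v; positivity)

theorem abs_inner_add_mul_abs_le_kNorm_mul_kNorm (hB : B.IsPosSemidef) (hc : 0 ≤ c) (x y : V) :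
    |⟪x, y⟫| + c * |B x y| ≤ kNorm B c x * kNorm B c y := by
  have hx := hB.nonneg x
  have hy := hB.nonneg y
  rw [← abs_of_nonneg hc, ← abs_mul, abs_of_nonneg hc]
  refine abs_add_abs_le_sqrt_add_mul_sqrt_add (by positivity) (by positivity) (by positivity)
    (by positivity) ?_ ?_
  · rw [← real_inner_self_eq_norm_sq, ← real_inner_self_eq_norm_sq]
    simpa [sq] using real_inner_mul_inner_self_le x y
  · have hB_cs : B x y ^ 2 ≤ B x x * B y y :=
      B.apply_sq_le_of_symm hB.nonneg (LinearMap.BilinForm.isSymm_iff.mp hB.isSymm) x y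
    calc (c * B x y) ^ 2 = c ^ 2 * B x y ^ 2 := by ring
      _ ≤ c ^ 2 * (B x x * B y y) := by gcongr
      _ = c * B x x * (c * B y y) := by ring

theorem kNorm_le_of_inner_add_eq (hB : B.IsPosSemidef) (hc : 0 ≤ c) {μ ξ₁ ξ₂ : V}
    (h : ⟪μ, μ⟫ + c * B μ μ = ⟪(2:ℝ) • ξ₁ - ξ₂, μ⟫ - c * B ((2:ℝ) • ξ₁ + ξ₂) μ) :
    kNorm B c μ ≤ 2 * kNorm B c ξ₁ + kNorm B c ξ₂ := by
  have hK₁ := abs_inner_add_mul_abs_le_kNorm_mul_kNorm hB hc ξ₁ μ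
  have hK₂ := abs_inner_add_mul_abs_le_kNorm_mul_kNorm hB hc ξ₂ μ
  have hsq : kNorm B c μ ^ 2 ≤ (2 * kNorm B c ξ₁ + kNorm B c ξ₂) * kNorm B c μ := by
    rw [kNorm_sq hB hc, ← real_inner_self_eq_norm_sq, h]
    simp only [inner_sub_left, real_inner_smul_left, map_add, map_smul, LinearMap.add_apply,
      LinearMap.smul_apply, smul_eq_mul]
    nlinarith [le_abs_self ⟪ξ₁, μ⟫, neg_abs_le ⟪ξ₂, μ⟫, neg_abs_le (B ξ₁ μ), neg_abs_le (B ξ₂ μ)]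
  nlinarith [kNorm_nonneg (B := B) (c := c) μ, kNorm_nonneg (B := B) (c := c) ξ₁,
    kNorm_nonneg (B := B) (c := c) ξ₂]

end KNorm

theorem K_norm_stability_general
    {V : Type*} [NormedAddCommGroup V] [InnerProductSpace ℝ V]
    (a : V → V → ℝ)
    (ha_add : ∀ x y z : V, a (x + y) z = a x z + a y z)
    (ha_smul : ∀ (c : ℝ) (x y : V), a (c • x) y = c * a x y)
    (ha_symm : ∀ x y : V, a x y = a y x)
    (ha_nonneg : ∀ x : V, 0 ≤ a x x)
    (τ : ℝ)
    (W : Submodule ℝ V)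
    (μ ξ₁ ξ₂ : V) (hμW : μ ∈ W)
    (hEq : ∀ v ∈ W, ⟪μ, v⟫ + (τ^2/4) * a μ v
      = ⟪(2:ℝ) • ξ₁ - ξ₂, v⟫ - (τ^2/4) * a ((2:ℝ) • ξ₁ + ξ₂) v)
    (K : V → ℝ)
    (hK : ∀ v : V, K v = Real.sqrt (‖v‖^2 + (τ^2/4) * a v v)) :
    K μ ≤ 2 * K ξ₁ + K ξ₂ := by
  have hK_eq : K = kNorm (.ofSymm a ha_add ha_smul ha_symm) (τ ^ 2 / 4) := funext hK
  rw [hK_eq]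
  exact kNorm_le_of_inner_add_eq
    (LinearMap.BilinForm.isPosSemidef_ofSymm a ha_add ha_smul ha_symm ha_nonneg) (by positivity)
    (hEq μ hμW)

theorem K_norm_stability
    {V : Type*} [NormedAddCommGroup V] [InnerProductSpace ℝ V]
    (a : V → V → ℝ)
    (ha_add : ∀ x y z : V, a (x + y) z = a x z + a y z)
    (ha_smul : ∀ (c : ℝ) (x y : V), a (c • x) y = c * a x y)
    (ha_symm : ∀ x y : V, a x y = a y x)
    (ha_nonneg : ∀ x : V, 0 ≤ a x x)
    (τ : ℝ) (hτ : 0 < τ)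
    (W : Submodule ℝ V)
    (μ ξ₁ ξ₂ : V) (hμW : μ ∈ W)
    (hEq : ∀ v ∈ W, ⟪μ, v⟫ + (τ^2/4) * a μ v
      = ⟪(2:ℝ) • ξ₁ - ξ₂, v⟫ - (τ^2/4) * a ((2:ℝ) • ξ₁ + ξ₂) v)
    (K : V → ℝ)
    (hK : ∀ v : V, K v = Real.sqrt (‖v‖^2 + (τ^2/4) * a v v)) :
    K μ ≤ 2 * K ξ₁ + K ξ₂ :=
  K_norm_stability_general a ha_add ha_smul ha_symm ha_nonneg τ W μ ξ₁ ξ₂ hμW hEq K hK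
end

section
/- Let V be a real inner product space, a : V → V → ℝ symmetric bilinear with α‖v‖² ≤ a v v for some α > 0 (after identification with a coercive form), τ > 0, h > 0, and suppose additionally the inverse inequality a v v ≤ C_inv² h⁻² ‖v‖² holds for all v ∈ V with some C_inv > 0. Define ‖v‖_K² = ‖v‖² + (τ²/4) a v v and, for pairs (v₀, v₁) ∈ V × V, the energy norm ‖(v₀,v₁)‖_E² = ‖(v₁ - v₀)/τ‖² + a((v₁+v₀)/2)((v₁+v₀)/2), and the discrete norm ‖(v₀,v₁)‖_{E_h}² = ‖(v₁-v₀)/τ‖_K² + τ⁻²‖(v₁+v₀)/2‖_K². Then there exist constants c, C > 0 depending only on α, C_inv such that c·min{τ, h/τ}·‖(v₀,v₁)‖_{E_h} ≤ ‖(v₀,v₁)‖_E ≤ C·‖(v₀,v₁)‖_{E_h} for all (v₀,v₁) ∈ V × V, assuming additionally a Poincaré–Friedrichs-type inequality ‖v‖² ≤ C_P² a v v. -/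
lemma energy_aux_lower (τ h C_inv C_P A B D F : ℝ)
    (hτ : 0 < τ) (hh : 0 < h)
    (hA : 0 ≤ A) (hB : 0 ≤ B) (hD : 0 ≤ D) (hF : 0 ≤ F)
    (hBle : B ≤ C_inv^2 * h⁻¹^2 * A) (hDle : D ≤ C_P^2 * F) :
    (A + (τ^2/4) * B) + τ⁻¹^2 * (D + (τ^2/4) * F)
      ≤ (1 + (τ^2/4) * C_inv^2 * h⁻¹^2 + τ⁻¹^2 * C_P^2 + 1/4) * (A + F) := by
  have h3 : τ⁻¹^2 * (τ^2/4) = 1/4 := by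
    field_simp
  have h1 : (τ^2/4) * B ≤ (τ^2/4) * (C_inv^2 * h⁻¹^2 * A) :=
    mul_le_mul_of_nonneg_left hBle (by positivity)
  have h2 : τ⁻¹^2 * D ≤ τ⁻¹^2 * (C_P^2 * F) :=
    mul_le_mul_of_nonneg_left hDle (by positivity)
  have e1 : (A + (τ^2/4) * B) + τ⁻¹^2 * (D + (τ^2/4) * F)
      = A + (τ^2/4) * B + τ⁻¹^2 * D + (τ⁻¹^2 * (τ^2/4)) * F := by ring
  rw [e1, h3]
  have e2 : (1 + (τ^2/4) * C_inv^2 * h⁻¹^2 + τ⁻¹^2 * C_P^2 + 1/4) * (A + F)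
      = (A + (τ^2/4) * (C_inv^2 * h⁻¹^2 * A) + τ⁻¹^2 * (C_P^2 * F) + (1/4) * F)
        + ((τ^2/4) * C_inv^2 * h⁻¹^2 * F + τ⁻¹^2 * C_P^2 * A + (1/4) * A + F) := by
    ring
  rw [e2]
  have hex : 0 ≤ (τ^2/4) * C_inv^2 * h⁻¹^2 * F + τ⁻¹^2 * C_P^2 * A + (1/4) * A + F := by
    have : 0 ≤ (τ^2/4) * C_inv^2 * h⁻¹^2 * F := by
      have := mul_le_mul_of_nonneg_left hBle (by positivity : (0:ℝ) ≤ 1)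
      positivity
    have : 0 ≤ τ⁻¹^2 * C_P^2 * A := by positivity
    nlinarith [hA, hF, mul_nonneg (mul_nonneg (mul_nonneg (by positivity : (0:ℝ) ≤ τ^2/4)
      (by positivity : (0:ℝ) ≤ C_inv^2)) (by positivity : (0:ℝ) ≤ h⁻¹^2)) hF,
      mul_nonneg (mul_nonneg (by positivity : (0:ℝ) ≤ τ⁻¹^2) (by positivity : (0:ℝ) ≤ C_P^2)) hA]
  linarith [h1, h2]

lemma energy_aux_upper (τ h A B D F : ℝ)
    (hτ : 0 < τ) (hh : 0 < h)
    (hA : 0 ≤ A) (hB : 0 ≤ B) (hD : 0 ≤ D) (hF : 0 ≤ F) :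
    A + F ≤ 4 * ((A + (τ^2/4) * B) + τ⁻¹^2 * (D + (τ^2/4) * F)) := by
  have h3 : τ⁻¹^2 * (τ^2/4) = 1/4 := by
    field_simp
  have e1 : 4 * ((A + (τ^2/4) * B) + τ⁻¹^2 * (D + (τ^2/4) * F))
      = 4*A + τ^2 * B + 4 * τ⁻¹^2 * D + 4 * (τ⁻¹^2 * (τ^2/4)) * F := by ring
  rw [e1, h3]
  have : 0 ≤ τ^2 * B := by positivity
  have : 0 ≤ 4 * τ⁻¹^2 * D := by positivity
  linarith

theorem energy_norm_equivalence
    {V : Type*} [NormedAddCommGroup V] [InnerProductSpace ℝ V]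
    (a : V → V → ℝ)
    (ha_add : ∀ x y z : V, a (x + y) z = a x z + a y z)
    (ha_smul : ∀ (c : ℝ) (x y : V), a (c • x) y = c * a x y)
    (ha_symm : ∀ x y : V, a x y = a y x)
    (α : ℝ) (hα : 0 < α) (h_coer : ∀ v : V, α * ‖v‖^2 ≤ a v v)
    (τ h : ℝ) (hτ : 0 < τ) (hh : 0 < h)
    (C_inv : ℝ) (hC_inv : 0 < C_inv)
    (h_inv : ∀ v : V, a v v ≤ C_inv^2 * h⁻¹^2 * ‖v‖^2)
    (C_P : ℝ) (hC_P : 0 < C_P)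
    (h_poincare : ∀ v : V, ‖v‖^2 ≤ C_P^2 * a v v)
    (E Eh : V × V → ℝ)
    (hE : ∀ p : V × V, E p = Real.sqrt (‖(1/τ) • (p.2 - p.1)‖^2
        + a ((1/2 : ℝ) • (p.2 + p.1)) ((1/2 : ℝ) • (p.2 + p.1))))
    (hEh : ∀ p : V × V, Eh p = Real.sqrt
        ((‖(1/τ) • (p.2 - p.1)‖^2 + (τ^2/4) * a ((1/τ) • (p.2 - p.1)) ((1/τ) • (p.2 - p.1)))
          + τ⁻¹^2 * (‖(1/2 : ℝ) • (p.2 + p.1)‖^2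
            + (τ^2/4) * a ((1/2 : ℝ) • (p.2 + p.1)) ((1/2 : ℝ) • (p.2 + p.1))))) :
    ∃ c C : ℝ, 0 < c ∧ 0 < C ∧
      ∀ p : V × V, c * min τ (h/τ) * Eh p ≤ E p ∧ E p ≤ C * Eh p := by
  have hm : 0 < min τ (h/τ) := lt_min hτ (div_pos hh hτ)
  have hK : (0:ℝ) < 1 + (τ^2/4) * C_inv^2 * h⁻¹^2 + τ⁻¹^2 * C_P^2 + 1/4 := by positivity
  set K : ℝ := 1 + (τ^2/4) * C_inv^2 * h⁻¹^2 + τ⁻¹^2 * C_P^2 + 1/4 with hKdef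
  have hsK : 0 < Real.sqrt K := Real.sqrt_pos.mpr hK
  refine ⟨(Real.sqrt K * min τ (h/τ))⁻¹, 2, by positivity, by norm_num, fun p => ?_⟩
  have hB : 0 ≤ a ((1/τ) • (p.2 - p.1)) ((1/τ) • (p.2 - p.1)) :=
    le_trans (by positivity) (h_coer _)
  have hF : 0 ≤ a ((1/2 : ℝ) • (p.2 + p.1)) ((1/2 : ℝ) • (p.2 + p.1)) :=
    le_trans (by positivity) (h_coer _)
  have hXnn : 0 ≤ (‖(1/τ) • (p.2 - p.1)‖^2
        + (τ^2/4) * a ((1/τ) • (p.2 - p.1)) ((1/τ) • (p.2 - p.1)))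
      + τ⁻¹^2 * (‖(1/2 : ℝ) • (p.2 + p.1)‖^2
        + (τ^2/4) * a ((1/2 : ℝ) • (p.2 + p.1)) ((1/2 : ℝ) • (p.2 + p.1))) := by positivity
  constructor
  · have hX_le := energy_aux_lower τ h C_inv C_P
      (‖(1/τ) • (p.2 - p.1)‖^2) (a ((1/τ) • (p.2 - p.1)) ((1/τ) • (p.2 - p.1)))
      (‖(1/2 : ℝ) • (p.2 + p.1)‖^2)
      (a ((1/2 : ℝ) • (p.2 + p.1)) ((1/2 : ℝ) • (p.2 + p.1)))
      hτ hh (by positivity) hB (by positivity) hF (h_inv _) (h_poincare _)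
    have hEh_le : Eh p ≤ Real.sqrt K * E p := by
      rw [hEh p, hE p, ← Real.sqrt_mul hK.le]
      exact Real.sqrt_le_sqrt hX_le
    have heq : (Real.sqrt K * min τ (h/τ))⁻¹ * min τ (h/τ) * Eh p
        = Eh p / Real.sqrt K := by
      field_simp
    rw [heq, div_le_iff₀ hsK]
    linarith
  · have hsq := energy_aux_upper τ h
      (‖(1/τ) • (p.2 - p.1)‖^2) (a ((1/τ) • (p.2 - p.1)) ((1/τ) • (p.2 - p.1)))
      (‖(1/2 : ℝ) • (p.2 + p.1)‖^2)
      (a ((1/2 : ℝ) • (p.2 + p.1)) ((1/2 : ℝ) • (p.2 + p.1)))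
      hτ hh (by positivity) hB (by positivity) hF
    have step1 : E p ≤ Real.sqrt (4 * ((‖(1/τ) • (p.2 - p.1)‖^2
        + (τ^2/4) * a ((1/τ) • (p.2 - p.1)) ((1/τ) • (p.2 - p.1)))
      + τ⁻¹^2 * (‖(1/2 : ℝ) • (p.2 + p.1)‖^2
        + (τ^2/4) * a ((1/2 : ℝ) • (p.2 + p.1)) ((1/2 : ℝ) • (p.2 + p.1))))) := by
      rw [hE p]
      exact Real.sqrt_le_sqrt hsq
    have step2 : Real.sqrt (4 * ((‖(1/τ) • (p.2 - p.1)‖^2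
        + (τ^2/4) * a ((1/τ) • (p.2 - p.1)) ((1/τ) • (p.2 - p.1)))
      + τ⁻¹^2 * (‖(1/2 : ℝ) • (p.2 + p.1)‖^2
        + (τ^2/4) * a ((1/2 : ℝ) • (p.2 + p.1)) ((1/2 : ℝ) • (p.2 + p.1))))) = 2 * Eh p := by
      rw [hEh p, show (4:ℝ) = 2^2 by norm_num,
        Real.sqrt_mul (by positivity : (0:ℝ) ≤ (2:ℝ)^2),
        Real.sqrt_sq (by norm_num : (0:ℝ) ≤ 2)]
    linarith [step1, step2.le, step2.ge]
end
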